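/- Vanishing of the rotational gradient along the iteration (part of Theorem 4.1): Let H be an n×n real symmetric matrix with λ₁·Iₙ ≤ H ≤ 0 in the Loewner order, where λ₁ < 0. Let (Uₙ)ₙ, (Ûₙ₊₁)ₙ, (Ũₙ)ₙ be n×N real matrices and (sₙ)ₙ positive step sizes such that for every n: Ûₙ₊₁ = Uₙ − sₙ·𝒜_{Ũₙ}·Ũₙ, Ũₙ = (Uₙ + Ûₙ₊₁)/2, and Uₙ₊₁ = Ûₙ₊₁ − sₙ·H·Ûₙ₊₁·(I_N − Ûₙ₊₁ᵀ·Ûₙ₊₁). Assume Uₙᵀ·Uₙ ≤ I_N for every n, that sₙ ≤ δ for all n with δ·|λ₁| < 1, and that Σₙ sₙ = ∞. Then liminf_{n→∞} ‖𝒜_{Ũₙ}·Ũₙ‖_F = 0, i.e. for every ε > 0 there exist infinitely many n with ‖𝒜_{Ũₙ}·Ũₙ‖_F < ε. -/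

import Mathlib

/-!
The energy E(U) = ½·tr(UᵀHU) is a Lyapunov function of the scheme. Writing G = 𝒜_Ũ·Ũ, the
predictor reads U = Ũ + (s/2)·G, Û = Ũ − (s/2)·G, and GᵀŨ is skew because 𝒜_Ũ is; hence
ÛᵀÛ = UᵀU, ŨᵀŨ ≤ UᵀU ≤ I, and E(U) − E(Û) = (s/2)·‖𝒜_Ũ‖²_F ≥ (s/2)·‖G‖²_F. The corrector
does not increase E because H ≤ 0 and I − ÛᵀÛ ≥ 0. As E ≥ λ₁N/2 on {UᵀU ≤ I}, the series
Σ sₖ‖Gₖ‖²_F converges, which together with Σ sₖ = ∞ forbids ‖Gₖ‖_F ≥ ε for all large k.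
-/

open Matrix Filter

noncomputable section

/-- The skew-symmetric commutator 𝒜_W = H·W·Wᵀ − W·Wᵀ·H. -/
def commA {n N : ℕ} (H : Matrix (Fin n) (Fin n) ℝ) (W : Matrix (Fin n) (Fin N) ℝ) :
    Matrix (Fin n) (Fin n) ℝ :=
  H * W * Wᵀ - W * Wᵀ * H

/-- Loewner order: X ≤ Y iff Y − X is positive semidefinite. -/
def loewnerLE {k : ℕ} (X Y : Matrix (Fin k) (Fin k) ℝ) : Prop :=
  (Y - X).PosSemidef

/-- Frobenius norm of a real matrix. -/
def frobNorm {m k : ℕ} (A : Matrix (Fin m) (Fin k) ℝ) : ℝ :=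
  Real.sqrt (∑ i, ∑ j, (A i j) ^ 2)

open scoped MatrixOrder

theorem frequently_lt_of_sufficient_decrease {φ s g : ℕ → ℝ} {C : ℝ} (hs : ∀ k, 0 ≤ s k)
    (hdiv : Tendsto (fun m => ∑ k ∈ Finset.range m, s k) atTop atTop) (hlow : ∀ k, C ≤ φ k)
    (hstep : ∀ k, φ (k + 1) + s k * g k ≤ φ k) {ε : ℝ} (hε : 0 < ε) :
    ∃ᶠ k in atTop, g k < ε := by
  by_contra hcon
  obtain ⟨m, hm⟩ := eventually_atTop.mp (not_frequently.mp hcon)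
  have hmono : ∀ k ≥ m, φ k + ε * ∑ i ∈ Finset.range k, s i
      ≤ φ m + ε * ∑ i ∈ Finset.range m, s i := by
    intro k hk
    induction k, hk using Nat.le_induction with
    | base => rfl
    | succ k hk ih =>
      have := mul_le_mul_of_nonneg_left (not_lt.mp (hm k hk)) (hs k)
      rw [Finset.sum_range_succ]
      linarith [hstep k]
  obtain ⟨k, hkm, hk⟩ := ((eventually_ge_atTop m).and (hdiv.eventually_gt_atTop
    ((φ m + ε * ∑ i ∈ Finset.range m, s i - C) / ε))).exists
  rw [div_lt_iff₀' hε] at hk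
  linarith [hmono k hkm, hlow k]

section General

variable {m ι : Type*} [Fintype m] [Fintype ι]

theorem Matrix.PosSemidef.trace_mul_nonneg {A B : Matrix m m ℝ}
    (hA : A.PosSemidef) (hB : B.PosSemidef) : 0 ≤ (A * B).trace := by
  classical
  obtain ⟨C, rfl⟩ := CStarAlgebra.nonneg_iff_eq_star_mul_self.mp hA.nonneg
  rw [star_eq_conjTranspose, trace_mul_cycle, trace_mul_cycle]
  exact (hB.mul_mul_conjTranspose_same C).trace_nonneg

/-- Both sides say that the block matrix `[[1, W], [Wᵀ, 1]]` is positive semidefinite, read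
through either of its two Schur complements. -/
theorem Matrix.transpose_mul_self_le_one_iff [DecidableEq m] [DecidableEq ι]
    {W : Matrix m ι ℝ} : Wᵀ * W ≤ 1 ↔ W * Wᵀ ≤ 1 := by
  let _ : Invertible (1 : Matrix m m ℝ) := invertibleOne
  let _ : Invertible (1 : Matrix ι ι ℝ) := invertibleOne
  have h₁ := PosDef.fromBlocks₁₁ W (1 : Matrix ι ι ℝ) (PosDef.one (n := m))
  have h₂ := PosDef.fromBlocks₂₂ (1 : Matrix m m ℝ) W (PosDef.one (n := ι))
  simp only [inv_one, Matrix.mul_one, conjTranspose_eq_transpose_of_trivial] at h₁ h₂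
  exact h₁.symm.trans h₂

def energy (H : Matrix m m ℝ) (W : Matrix m ι ℝ) : ℝ :=
  (Wᵀ * H * W).trace / 2

variable {H : Matrix m m ℝ}

theorem energy_add (hH : H.IsSymm) (X Y : Matrix m ι ℝ) :
    energy H (X + Y) = energy H X + (Yᵀ * H * X).trace + energy H Y := by
  have hpolar : (Xᵀ * H * Y).trace = (Yᵀ * H * X).trace := by
    rw [← trace_transpose]
    simp only [transpose_mul, transpose_transpose, hH.eq, Matrix.mul_assoc]
  simp only [energy, transpose_add, Matrix.add_mul, Matrix.mul_add, trace_add, hpolar]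
  ring

theorem energy_sub (hH : H.IsSymm) (X Y : Matrix m ι ℝ) :
    energy H (X - Y) = energy H X - (Yᵀ * H * X).trace + energy H Y := by
  have hneg : energy H (-Y) = energy H Y := by simp [energy]
  rw [sub_eq_add_neg, energy_add hH, hneg, transpose_neg, Matrix.neg_mul, Matrix.neg_mul,
    trace_neg, ← sub_eq_add_neg]

theorem energy_nonpos (hH : H ≤ 0) (W : Matrix m ι ℝ) : energy H W ≤ 0 := by
  have := (hH.conjTranspose_mul_mul_same W).trace_nonneg
  simp only [conjTranspose_eq_transpose_of_trivial, zero_sub, Matrix.mul_neg, Matrix.neg_mul,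
    trace_neg] at this
  rw [energy]
  linarith

theorem mul_card_div_two_le_energy [DecidableEq m] [DecidableEq ι] {lam : ℝ} (hlam : lam ≤ 0)
    (hH : lam • 1 ≤ H) {W : Matrix m ι ℝ} (hW : Wᵀ * W ≤ 1) :
    lam * Fintype.card ι / 2 ≤ energy H W := by
  have hshift := (hH.conjTranspose_mul_mul_same W).trace_nonneg
  simp only [conjTranspose_eq_transpose_of_trivial, Matrix.mul_sub, Matrix.sub_mul,
    Matrix.mul_smul, Matrix.smul_mul, Matrix.mul_one, trace_sub, trace_smul, smul_eq_mul]
    at hshift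
  have hgram := hW.trace_nonneg
  rw [trace_sub, trace_one] at hgram
  rw [energy]
  nlinarith

theorem energy_corrector_le [DecidableEq ι] (hH : H.IsSymm) (hHneg : H ≤ 0)
    {X : Matrix m ι ℝ} (hX : Xᵀ * X ≤ 1) {σ : ℝ} (hσ : 0 ≤ σ) :
    energy H (X - σ • (H * X * (1 - Xᵀ * X))) ≤ energy H X := by
  set R := 1 - Xᵀ * X
  have hRT : Rᵀ = R := hX.isHermitian
  have hcross :
      ((σ • (H * X * R))ᵀ * H * X).trace = σ * (R * ((H * X)ᵀ * (H * X))).trace := by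
    simp only [transpose_smul, transpose_mul, hRT, hH.eq, Matrix.smul_mul, trace_smul,
      smul_eq_mul, Matrix.mul_assoc]
  have hdescent : 0 ≤ (R * ((H * X)ᵀ * (H * X))).trace :=
    hX.trace_mul_nonneg (posSemidef_conjTranspose_mul_self (H * X))
  rw [energy_sub hH, hcross]
  nlinarith [energy_nonpos hHneg (σ • (H * X * R))]

end General

theorem frobNorm_sq {m k : ℕ} (A : Matrix (Fin m) (Fin k) ℝ) :
    frobNorm A ^ 2 = (Aᵀ * A).trace := by
  rw [frobNorm, Real.sq_sqrt (by positivity)]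
  simp only [trace, diag, mul_apply, transpose_apply, sq]
  exact Finset.sum_comm

theorem frobNorm_mul_le_of_transpose_mul_self_le_one {m n N : ℕ}
    (A : Matrix (Fin m) (Fin n) ℝ) {W : Matrix (Fin n) (Fin N) ℝ} (hW : Wᵀ * W ≤ 1) :
    frobNorm (A * W) ≤ frobNorm A := by
  have hW' : (1 - W * Wᵀ).PosSemidef := transpose_mul_self_le_one_iff.mp hW
  have hgap : 0 ≤ (Aᵀ * A * (1 - W * Wᵀ)).trace :=
    (posSemidef_conjTranspose_mul_self A).trace_mul_nonneg hW'
  have hcyc : ((A * W)ᵀ * (A * W)).trace = (Aᵀ * A * (W * Wᵀ)).trace := by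
    rw [transpose_mul, Matrix.mul_assoc, trace_mul_comm]
    simp only [Matrix.mul_assoc]
  have hsq : frobNorm (A * W) ^ 2 ≤ frobNorm A ^ 2 := by
    rw [Matrix.mul_sub, Matrix.mul_one, trace_sub] at hgap
    rw [frobNorm_sq, frobNorm_sq, hcyc]
    linarith
  exact (pow_le_pow_iff_left₀ (Real.sqrt_nonneg _) (Real.sqrt_nonneg _) two_ne_zero).mp hsq

theorem eq_add_smul_and_eq_sub_smul_of_midpoint {E : Type*} [AddCommGroup E] [Module ℝ E]
    {u uh ut G : E} {σ : ℝ} (hpred : uh = u - σ • G) (hmid : ut = (1 / 2 : ℝ) • (u + uh)) :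
    u = ut + (σ / 2) • G ∧ uh = ut - (σ / 2) • G := by
  subst hpred hmid
  constructor <;> module

section Commutator

variable {n N : ℕ} {H : Matrix (Fin n) (Fin n) ℝ}

theorem commA_transpose (hH : H.IsSymm) (W : Matrix (Fin n) (Fin N) ℝ) :
    (commA H W)ᵀ = -commA H W := by
  simp only [commA, transpose_sub, transpose_mul, transpose_transpose, hH.eq, Matrix.mul_assoc]
  abel

theorem transpose_commA_mul_mul (hH : H.IsSymm) (W : Matrix (Fin n) (Fin N) ℝ) :
    (commA H W * W)ᵀ * W = -(Wᵀ * (commA H W * W)) := by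
  rw [transpose_mul, commA_transpose hH, Matrix.mul_neg, Matrix.neg_mul, Matrix.mul_assoc]

theorem transpose_mul_self_add_smul_commA_mul (hH : H.IsSymm) (W : Matrix (Fin n) (Fin N) ℝ)
    (c : ℝ) :
    (W + c • (commA H W * W))ᵀ * (W + c • (commA H W * W))
      = Wᵀ * W + c ^ 2 • ((commA H W * W)ᵀ * (commA H W * W)) := by
  simp only [transpose_add, transpose_smul, Matrix.add_mul, Matrix.mul_add, Matrix.smul_mul,
    Matrix.mul_smul, transpose_commA_mul_mul hH]
  module

theorem trace_transpose_commA_mul_commA (hH : H.IsSymm) (W : Matrix (Fin n) (Fin N) ℝ) :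
    ((commA H W)ᵀ * commA H W).trace = 2 * ((commA H W * W)ᵀ * H * W).trace := by
  have hAT := commA_transpose hH W
  set A := commA H W
  have hA : A = H * (W * Wᵀ) - W * Wᵀ * H := by simp only [A, commA, Matrix.mul_assoc]
  have hgrad : ((A * W)ᵀ * H * W).trace = (Aᵀ * H * (W * Wᵀ)).trace := by
    simp only [transpose_mul, Matrix.mul_assoc]
    rw [trace_mul_comm]
    simp only [Matrix.mul_assoc]
  have hP : (W * Wᵀ)ᵀ = W * Wᵀ := by rw [transpose_mul, transpose_transpose]
  generalize W * Wᵀ = P at hA hgrad hP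
  have hswap : (Aᵀ * P * H).trace = -(Aᵀ * H * P).trace := by
    rw [← trace_transpose]
    simp only [transpose_mul, transpose_transpose, hH.eq, hP]
    rw [← Matrix.mul_assoc, trace_mul_comm, hAT]
    simp only [Matrix.neg_mul, trace_neg, neg_neg, Matrix.mul_assoc]
  calc (Aᵀ * A).trace = (Aᵀ * H * P).trace - (Aᵀ * P * H).trace := by
        nth_rewrite 2 [hA]
        rw [Matrix.mul_sub, trace_sub, ← Matrix.mul_assoc, ← Matrix.mul_assoc]
    _ = 2 * ((A * W)ᵀ * H * W).trace := by rw [hswap, hgrad]; ring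

theorem energy_add_smul_sub_energy_sub_smul (hH : H.IsSymm) (W : Matrix (Fin n) (Fin N) ℝ)
    (c : ℝ) :
    energy H (W + c • (commA H W * W)) - energy H (W - c • (commA H W * W))
      = c * frobNorm (commA H W) ^ 2 := by
  rw [energy_add hH, energy_sub hH, frobNorm_sq, trace_transpose_commA_mul_commA hH,
    transpose_smul, Matrix.smul_mul, Matrix.smul_mul, trace_smul, smul_eq_mul]
  ring

theorem energy_step (hH : H.IsSymm) (hHneg : H ≤ 0) {u uh ut u' : Matrix (Fin n) (Fin N) ℝ}
    {σ : ℝ} (hσ : 0 ≤ σ) (hpred : uh = u - σ • (commA H ut * ut))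
    (hmid : ut = (1 / 2 : ℝ) • (u + uh)) (hcorr : u' = uh - σ • (H * uh * (1 - uhᵀ * uh)))
    (hu : uᵀ * u ≤ 1) :
    energy H u' + σ * (frobNorm (commA H ut * ut) ^ 2 / 2) ≤ energy H u := by
  obtain ⟨hu_eq, huh_eq⟩ := eq_add_smul_and_eq_sub_smul_of_midpoint hpred hmid
  have hgram_u := transpose_mul_self_add_smul_commA_mul hH ut (σ / 2)
  rw [← hu_eq] at hgram_u
  have hgram_uh : uhᵀ * uh = uᵀ * u := by
    rw [huh_eq, sub_eq_add_neg, ← neg_smul, transpose_mul_self_add_smul_commA_mul hH, neg_sq,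
      hgram_u]
  have hut : utᵀ * ut ≤ 1 := by
    refine le_trans ?_ hu
    rw [le_iff, hgram_u, add_sub_cancel_left]
    exact (posSemidef_conjTranspose_mul_self _).smul (sq_nonneg _)
  have hpredE := energy_add_smul_sub_energy_sub_smul hH ut (σ / 2)
  rw [← hu_eq, ← huh_eq] at hpredE
  have hcorrE : energy H u' ≤ energy H uh :=
    hcorr ▸ energy_corrector_le hH hHneg (hgram_uh ▸ hu) hσ
  have hfrob : frobNorm (commA H ut * ut) ^ 2 ≤ frobNorm (commA H ut) ^ 2 :=
    pow_le_pow_left₀ (Real.sqrt_nonneg _)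
      (frobNorm_mul_le_of_transpose_mul_self_le_one (commA H ut) hut) 2
  nlinarith [mul_le_mul_of_nonneg_left hfrob hσ]

end Commutator

theorem rotational_gradient_liminf_zero_general
    {n N : ℕ} (H : Matrix (Fin n) (Fin n) ℝ) (hH : H.IsSymm)
    (lam1 : ℝ) (hlam1 : lam1 < 0)
    (hHlow : loewnerLE (lam1 • (1 : Matrix (Fin n) (Fin n) ℝ)) H)
    (hHup : loewnerLE H 0)
    (U Uhat Ut : ℕ → Matrix (Fin n) (Fin N) ℝ) (s : ℕ → ℝ)
    (hs : ∀ k, 0 < s k)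
    (hpred : ∀ k, Uhat k = U k - s k • (commA H (Ut k) * Ut k))
    (hmid : ∀ k, Ut k = (1 / 2 : ℝ) • (U k + Uhat k))
    (hcorr : ∀ k, U (k + 1) = Uhat k - s k • (H * Uhat k * (1 - (Uhat k)ᵀ * Uhat k)))
    (hUle : ∀ k, loewnerLE ((U k)ᵀ * U k) 1)
    (hdiv : Tendsto (fun m => ∑ k ∈ Finset.range m, s k) atTop atTop) :
    ∀ ε > 0, ∀ m : ℕ, ∃ k ≥ m, frobNorm (commA H (Ut k) * Ut k) < ε := by
  intro ε hε
  have hstep (k : ℕ) := energy_step hH hHup (hs k).le (hpred k) (hmid k) (hcorr k) (hUle k)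
  have hlow (k : ℕ) := mul_card_div_two_le_energy hlam1.le hHlow (hUle k)
  have hsmall := frequently_lt_of_sufficient_decrease (fun k => (hs k).le) hdiv hlow hstep
    (half_pos (pow_pos hε 2))
  refine frequently_atTop.mp (hsmall.mono fun k hk => ?_)
  exact lt_of_pow_lt_pow_left₀ 2 hε.le (by linarith)

/-- Vanishing of the rotational gradient along the iteration (part of Theorem 4.1):
the quantity ‖𝒜_{Ũₙ}·Ũₙ‖_F gets below every ε > 0 infinitely often. -/
theorem rotational_gradient_liminf_zero
    {n N : ℕ} (H : Matrix (Fin n) (Fin n) ℝ) (hH : H.IsSymm)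
    (lam1 : ℝ) (hlam1 : lam1 < 0)
    (hHlow : loewnerLE (lam1 • (1 : Matrix (Fin n) (Fin n) ℝ)) H)
    (hHup : loewnerLE H 0)
    (U Uhat Ut : ℕ → Matrix (Fin n) (Fin N) ℝ) (s : ℕ → ℝ)
    (hs : ∀ k, 0 < s k)
    (hpred : ∀ k, Uhat k = U k - s k • (commA H (Ut k) * Ut k))
    (hmid : ∀ k, Ut k = (1 / 2 : ℝ) • (U k + Uhat k))
    (hcorr : ∀ k, U (k + 1) = Uhat k - s k • (H * Uhat k * (1 - (Uhat k)ᵀ * Uhat k)))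
    (hUle : ∀ k, loewnerLE ((U k)ᵀ * U k) 1)
    (δ : ℝ) (hsδ : ∀ k, s k ≤ δ) (hδ : δ * |lam1| < 1)
    (hdiv : Tendsto (fun m => ∑ k ∈ Finset.range m, s k) atTop atTop) :
    ∀ ε > 0, ∀ m : ℕ, ∃ k ≥ m, frobNorm (commA H (Ut k) * Ut k) < ε :=
  rotational_gradient_liminf_zero_general H hH lam1 hlam1 hHlow hHup U Uhat Ut s hs hpred hmid hcorr
    hUle hdiv

end
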